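/- Along a Lagrangian trajectory (x(t), z(t)) with ẋ = u(x) and ż = w(x,z), where w(x,z) = (M₀/g - 3u(x)²/(2g) - z)·u'(x), the free surface deviation and trajectory satisfy: the quantity (η(x(t)) - z(t))/h(x(t)) is constant in time, where η = z_b + h; i.e., the relative depth of the particle is conserved. -/

import Mathlib

/-!
Bernoulli's law gives `η = M₀/g - u²/(2g)`, and with it the vertical velocity becomes
`w = (η - z - u²/g) u'`, so along the flow `(η - z)' = -u'(x) (η - z)`. Mass conservation
`u h = Q₀` gives `u' h = -u h'`, so the depth `h(x)` seen by the particle solves the same linear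
equation `y' = -u'(x) y`, and the ratio of two solutions of a linear equation is constant.
-/

theorem div_eq_div_of_hasDerivAt_mul {p r a : ℝ → ℝ}
    (hp : ∀ t, HasDerivAt p (a t * p t) t) (hr : ∀ t, HasDerivAt r (a t * r t) t)
    (hr0 : ∀ t, r t ≠ 0) (t s : ℝ) : p t / r t = p s / r s := by
  have hq : ∀ t, HasDerivAt (fun s => p s / r s) 0 t := fun t => by
    refine ((hp t).div (hr t) (hr0 t)).congr_deriv ?_
    ring
  exact is_const_of_deriv_eq_zero (fun t => (hq t).differentiableAt) (fun t => (hq t).deriv) t s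

theorem hasDerivAt_head_sub_along_flow {u x z : ℝ → ℝ} {c g u' t : ℝ}
    (hu : HasDerivAt u u' (x t)) (hx : HasDerivAt x (u (x t)) t)
    (hz : HasDerivAt z ((c - 3 * u (x t) ^ 2 / (2 * g) - z t) * u') t) :
    HasDerivAt (fun s => c - u (x s) ^ 2 / (2 * g) - z s)
      (-u' * (c - u (x t) ^ 2 / (2 * g) - z t)) t := by
  refine ((((hu.comp t hx).pow 2).div_const (2 * g)).const_sub c).sub hz |>.congr_deriv ?_
  simp only [Function.comp_apply]
  ring

theorem relative_depth_conserved_general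
    (g Q₀ M₀ : ℝ)
    (h u zb η : ℝ → ℝ) (hh : Differentiable ℝ h) (hpos : ∀ x, 0 < h x)
    (hu : ∀ x, u x = Q₀ / h x)
    (hzb : ∀ x, zb x = M₀ / g - Q₀ ^ 2 / (2 * g * h x ^ 2) - h x)
    (hη : ∀ x, η x = zb x + h x)
    (w : ℝ → ℝ → ℝ)
    (hw : ∀ x z, w x z = (M₀ / g - 3 * u x ^ 2 / (2 * g) - z) * deriv u x)
    (x z : ℝ → ℝ)
    (hx : ∀ t, HasDerivAt x (u (x t)) t)
    (hz : ∀ t, HasDerivAt z (w (x t) (z t)) t) :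
    ∀ t : ℝ, (η (x t) - z t) / h (x t) = (η (x 0) - z 0) / h (x 0) := by
  have hh0 : ∀ y, h y ≠ 0 := fun y => (hpos y).ne'
  have hu_eq : u = fun y => Q₀ / h y := funext hu
  have hu_diff : Differentiable ℝ u := by
    rw [hu_eq]
    exact fun y => (differentiableAt_const Q₀).div (hh y) (hh0 y)
  have hu_deriv : ∀ y, deriv u y = -Q₀ * deriv h y / h y ^ 2 := fun y => by
    rw [hu_eq]
    exact deriv_const_div Q₀ (hh y) (hh0 y)
  have hη_bernoulli : ∀ y, η y = M₀ / g - u y ^ 2 / (2 * g) := fun y => by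
    rw [hη, hzb, hu]
    ring
  have hdepth : ∀ t, HasDerivAt (fun s => h (x s)) (-deriv u (x t) * h (x t)) t := fun t => by
    refine ((hh (x t)).hasDerivAt.comp t (hx t)).congr_deriv ?_
    rw [hu_deriv, hu]
    field_simp [hh0 (x t)]
  have hhead : ∀ t, HasDerivAt (fun s => η (x s) - z s) (-deriv u (x t) * (η (x t) - z t)) t :=
    fun t => by
      simp only [hη_bernoulli]
      exact hasDerivAt_head_sub_along_flow (hu_diff (x t)).hasDerivAt (hx t)
        (hw (x t) (z t) ▸ hz t)
  exact fun t => div_eq_div_of_hasDerivAt_mul hhead hdepth (fun s => hh0 (x s)) t 0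

/-- The relative depth of a Lagrangian particle is conserved in time. -/
theorem relative_depth_conserved
    (g Q₀ M₀ : ℝ) (hg : 0 < g) (hQ : 0 < Q₀)
    (h u zb η : ℝ → ℝ) (hh : Differentiable ℝ h) (hpos : ∀ x, 0 < h x)
    (hu : ∀ x, u x = Q₀ / h x)
    (hzb : ∀ x, zb x = M₀ / g - Q₀ ^ 2 / (2 * g * h x ^ 2) - h x)
    (hη : ∀ x, η x = zb x + h x)
    (w : ℝ → ℝ → ℝ)
    (hw : ∀ x z, w x z = (M₀ / g - 3 * u x ^ 2 / (2 * g) - z) * deriv u x)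
    (x z : ℝ → ℝ)
    (hx : ∀ t, HasDerivAt x (u (x t)) t)
    (hz : ∀ t, HasDerivAt z (w (x t) (z t)) t)
    (hinit : zb (x 0) ≤ z 0 ∧ z 0 ≤ η (x 0)) :
    ∀ t : ℝ, (η (x t) - z t) / h (x t) = (η (x 0) - z 0) / h (x 0) :=
  relative_depth_conserved_general g Q₀ M₀ h u zb η hh hpos hu hzb hη w hw x z hx hz
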